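/- arXiv:2201.04181 — 6 statements merged into one kernel-verified Lean document; each statement's English description precedes it below -/
import Mathlib

section
/- The number of derangements of [n] equals the number of permutations of [n] having exactly one fixed point among the first n-1 points: d_n = c(n, n-1, 1). -/
/-- `c n k d` : number of permutations of `{1,...,n}` (modeled as `Fin n`)
with exactly `d` fixed points among the first `k` points. -/
noncomputable def c (n k d : ℕ) : ℕ :=
  Nat.card {α : Equiv.Perm (Fin n) //
    (Finset.univ.filter (fun i : Fin n => (i : ℕ) < k ∧ α i = i)).card = d}

/-- `p n k d = c n k d / n!`, the probability that a uniformly random permutation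
of `[n]` has exactly `d` fixed points among the first `k` points. -/
noncomputable def p (n k d : ℕ) : ℝ := (c n k d : ℝ) / (Nat.factorial n)

/-- `f n k d = c (n-1) k d / c n k d`, the conditional probability that the
`(k+1)`-st point is fixed given exactly `d` fixed points among the first `k` points. -/
noncomputable def f (n k d : ℕ) : ℝ := (c (n - 1) k d : ℝ) / (c n k d)


/-!
Fix a point `a`. If `σ` is a derangement, then `σ * swap (σ a) a` fixes `σ a` and no other point
besides possibly `a`; conversely, if `j` is the only fixed point of `τ` other than `a`, then
`τ * swap j a` is a derangement sending `a` to `j`, and the two constructions are mutually inverse. With `a` the last point this matches derangements of `[n]`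
with permutations having exactly one fixed point among the first `n - 1` points.
-/

open Equiv

namespace derangements

variable {α : Type*} [DecidableEq α]

theorem mul_swap_apply_eq_self_iff {σ : Perm α} (hσ : σ ∈ derangements α) (a : α) {x : α}
    (hx : x ≠ a) : (σ * swap (σ a) a) x = x ↔ x = σ a := by
  rw [Perm.mul_apply]
  constructor
  · intro h
    by_contra hxσ
    rw [swap_apply_of_ne_of_ne hxσ hx] at h
    exact hσ x h
  · rintro rfl
    rw [swap_apply_left]

theorem mul_swap_mem {τ : Perm α} {a j : α} (hja : j ≠ a) (hj : τ j = j)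
    (huniq : ∀ x, x ≠ a → τ x = x → x = j) : τ * swap j a ∈ derangements α := by
  intro x
  rw [Perm.mul_apply]
  rcases eq_or_ne x j with rfl | hxj
  · rw [swap_apply_left]
    exact fun h => hja (τ.injective (h.trans hj.symm)).symm
  rcases eq_or_ne x a with rfl | hxa
  · rw [swap_apply_right, hj]
    exact hja
  · rw [swap_apply_of_ne_of_ne hxj hxa]
    exact fun h => hxj (huniq x hxa h)

noncomputable def equivUniqueFixedPointNe (a : α) :
    derangements α ≃ {τ : Perm α // ∃! x, x ≠ a ∧ τ x = x} where
  toFun σ := ⟨σ * swap (σ.1 a) a, σ.1 a, ⟨σ.2 a, (mul_swap_apply_eq_self_iff σ.2 a (σ.2 a)).2 rfl⟩,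
    fun x hx => (mul_swap_apply_eq_self_iff σ.2 a hx.1).1 hx.2⟩
  invFun τ := ⟨τ * swap τ.2.choose a, mul_swap_mem τ.2.choose_spec.1.1 τ.2.choose_spec.1.2
    fun x hxa hx => τ.2.choose_spec.2 x ⟨hxa, hx⟩⟩
  left_inv σ := Subtype.ext <| by
    obtain ⟨σ, hσ⟩ := σ
    dsimp only
    generalize_proofs hτ
    rw [← hτ.choose_spec.2 (σ a) ⟨hσ a, (mul_swap_apply_eq_self_iff hσ a (hσ a)).2 rfl⟩,
      mul_swap_mul_self]
  right_inv τ := Subtype.ext <| by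
    obtain ⟨τ, hτ⟩ := τ
    dsimp only
    have hσa : (τ * swap hτ.choose a) a = hτ.choose := by
      rw [Perm.mul_apply, swap_apply_right, hτ.choose_spec.1.2]
    rw [hσa, mul_swap_mul_self]

end derangements

theorem c_self_zero (n : ℕ) : c n n 0 = Nat.card (derangements (Fin n)) := by
  refine Nat.card_congr (subtypeEquivRight fun σ => ?_)
  simp [Finset.card_eq_zero, Finset.filter_eq_empty_iff, derangements]

theorem c_succ_self_one (m : ℕ) :
    c (m + 1) m 1 = Nat.card {τ : Perm (Fin (m + 1)) // ∃! x, x ≠ Fin.last m ∧ τ x = x} := by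
  refine Nat.card_congr (subtypeEquivRight fun τ => ?_)
  rw [Fintype.existsUnique_iff_card_one]
  simp only [← Fin.lt_last_iff_ne_last, Fin.lt_def, Fin.val_last]

theorem stmt3 (n : ℕ) (hn : 1 ≤ n) :
    c n n 0 = c n (n - 1) 1 := by
  obtain ⟨m, rfl⟩ : ∃ m, n = m + 1 := ⟨n - 1, by omega⟩
  rw [c_self_zero, Nat.add_sub_cancel, c_succ_self_one]
  exact Nat.card_congr (derangements.equivUniqueFixedPointNe _)
end

section
/- The number of permutations of [n] with exactly one fixed point among the first n-1 points equals (n-1) times the number of permutations of [n-1] with no fixed points among the first n-2 points: c(n, n-1, 1) = (n-1) * c(n-1, n-2, 0). -/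
open Equiv Finset

namespace Equiv.Perm

variable {α β : Type*} [DecidableEq α] [DecidableEq β]

def fixedPointsIn (S : Finset α) (σ : Perm α) : Finset α := {x ∈ S | σ x = x}

@[simp]
theorem mem_fixedPointsIn {S : Finset α} {σ : Perm α} {x : α} :
    x ∈ fixedPointsIn S σ ↔ x ∈ S ∧ σ x = x :=
  mem_filter

theorem card_fixedPointsIn_permCongr (e : α ≃ β) {S : Finset α} {T : Finset β}
    (hST : ∀ x, e x ∈ T ↔ x ∈ S) (σ : Perm α) :
    #(fixedPointsIn T (e.permCongr σ)) = #(fixedPointsIn S σ) := by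
  have : fixedPointsIn T (e.permCongr σ) = (fixedPointsIn S σ).map e.toEmbedding := by
    ext y
    obtain ⟨x, rfl⟩ := e.surjective y
    simp [permCongr_apply, hST]
  rw [this, card_map]

theorem natCard_card_fixedPointsIn_congr (e : α ≃ β) {S : Finset α} {T : Finset β}
    (hST : ∀ x, e x ∈ T ↔ x ∈ S) (d : ℕ) :
    Nat.card {σ : Perm α // #(fixedPointsIn S σ) = d}
      = Nat.card {τ : Perm β // #(fixedPointsIn T τ) = d} :=
  Nat.card_congr <| e.permCongr.subtypeEquiv fun σ => by
    rw [card_fixedPointsIn_permCongr e hST]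

theorem natCard_fixedPointsIn_eq_singleton {S : Finset α} {a : α} (ha : a ∈ S) :
    Nat.card {σ : Perm α // fixedPointsIn S σ = {a}}
      = Nat.card {τ : Perm {x // x ≠ a} // #(fixedPointsIn (S.subtype (· ≠ a)) τ) = 0} := by
  refine (Nat.card_congr <|
    ((Perm.subtypeEquivSubtypePerm (· ≠ a)).subtypeEquiv fun τ => ?_).trans
      (subtypeSubtypeEquivSubtype fun {σ} h => ?_)).symm
  · have hσa : (Perm.subtypeEquivSubtypePerm (· ≠ a) τ).1 a = a :=
      subtypeEquivSubtypePerm_apply_of_not_mem τ (not_not.2 rfl)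
    have hσ (x : {x // x ≠ a}) : (Perm.subtypeEquivSubtypePerm (· ≠ a) τ).1 x = τ x :=
      subtypeEquivSubtypePerm_apply_of_mem τ x.2
    simp only [card_eq_zero, eq_empty_iff_forall_notMem, eq_singleton_iff_unique_mem,
      mem_fixedPointsIn, mem_subtype, ha, hσa, true_and, not_and]
    constructor
    · intro h x ⟨hxS, hx⟩
      by_contra hxa
      exact h ⟨x, hxa⟩ hxS (Subtype.ext (by rw [← hσ]; exact hx))
    · intro h x hxS hx
      exact x.2 (h x ⟨hxS, by rw [hσ, hx]⟩)
  · intro x hx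
    obtain rfl : x = a := not_not.1 hx
    exact (mem_fixedPointsIn.1 (h ▸ mem_singleton_self x)).2

theorem natCard_card_fixedPointsIn_eq_one [Fintype α] (S : Finset α) :
    Nat.card {σ : Perm α // #(fixedPointsIn S σ) = 1}
      = ∑ a ∈ S, Nat.card {σ : Perm α // fixedPointsIn S σ = {a}} := by
  simp only [Nat.card_eq_fintype_card, Fintype.card_subtype]
  rw [← card_biUnion]
  · congr 1
    ext σ
    simp only [mem_filter, mem_univ, true_and, mem_biUnion, card_eq_one]
    refine ⟨fun ⟨a, ha⟩ => ⟨a, ?_, ha⟩, fun ⟨a, _, ha⟩ => ⟨a, ha⟩⟩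
    exact (mem_fixedPointsIn.1 (ha ▸ mem_singleton_self a)).1
  · intro a _ b _ hab
    simp only [disjoint_left, mem_filter, mem_univ, true_and]
    exact fun σ ha hb => hab (singleton_inj.1 (ha.symm.trans hb))

end Equiv.Perm

open Equiv.Perm

theorem c_eq_natCard_fixedPointsIn (n k d : ℕ) :
    c n k d = Nat.card {σ : Perm (Fin n) //
      #(fixedPointsIn ({i | (i : ℕ) < k} : Finset (Fin n)) σ) = d} := by
  simp only [c, fixedPointsIn, filter_filter]

theorem c_zero_eq_zero (n : ℕ) {d : ℕ} (hd : d ≠ 0) : c n 0 d = 0 := by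
  rw [c_eq_natCard_fixedPointsIn, Nat.card_eq_zero]
  exact Or.inl ⟨fun ⟨σ, h⟩ => hd (by simpa [fixedPointsIn] using h.symm)⟩

theorem Fin.val_succAbove_lt_iff {m : ℕ} {p : Fin (m + 2)} (hp : (p : ℕ) < m + 1)
    (i : Fin (m + 1)) : ((p.succAbove i : ℕ) < m + 1 ↔ (i : ℕ) < m) := by
  rcases lt_or_ge i.castSucc p with h | h
  · rw [Fin.succAbove_of_castSucc_lt _ _ h]
    have : (i : ℕ) < p := h
    simp only [Fin.val_castSucc]
    omega
  · rw [Fin.succAbove_of_le_castSucc _ _ h]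
    simp

theorem natCard_fixedPointsIn_eq_singleton_eq_c (m : ℕ) {a : Fin (m + 2)}
    (ha : (a : ℕ) < m + 1) :
    Nat.card {σ : Perm (Fin (m + 2)) //
        fixedPointsIn ({i | (i : ℕ) < m + 1} : Finset (Fin (m + 2))) σ = {a}}
      = c (m + 1) m 0 := by
  rw [natCard_fixedPointsIn_eq_singleton (by simpa using ha), c_eq_natCard_fixedPointsIn,
    natCard_card_fixedPointsIn_congr (finSuccAboveEquiv a)]
  intro i
  simp only [mem_subtype, mem_filter, mem_univ, true_and, finSuccAboveEquiv_apply]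
  exact Fin.val_succAbove_lt_iff ha i

theorem stmt4 (n : ℕ) :
    c n (n - 1) 1 = (n - 1) * c (n - 1) (n - 2) 0 := by
  obtain _ | _ | m := n
  · simp [c_zero_eq_zero 0 one_ne_zero]
  · simp [c_zero_eq_zero 1 one_ne_zero]
  show c (m + 2) (m + 1) 1 = (m + 1) * c (m + 1) m 0
  rw [c_eq_natCard_fixedPointsIn, natCard_card_fixedPointsIn_eq_one,
    sum_congr rfl fun a ha => natCard_fixedPointsIn_eq_singleton_eq_c m (mem_filter.1 ha).2,
    sum_const, Fin.card_filter_val_lt, smul_eq_mul, min_eq_right (Nat.le_succ _)]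
end

section
/- Let n ≥ 2, 1 ≤ k ≤ n-1, 0 ≤ d ≤ k, and let i, j ∈ [n] with k < i and k < j. Then the number of permutations α of [n] with exactly d fixed points among the first k points and α(i) = j equals c(n-1, k, d). -/
/-!
Composing with the transposition `(i j)` turns a permutation sending `i` to `j` into one fixing `i`,
i.e. a permutation of `[n] \ {i}`, which `Fin.succAbove i` identifies with `[n-1]`. Since `i` and
`j` both lie beyond the first `k` points, neither step moves a fixed point among them, and
`succAbove i` is the identity on the first `k` values.
-/

namespace Equiv.Perm

variable {α : Type*} [DecidableEq α]

def subtypeNeEquivApplyEq (a b : α) : Perm {x // x ≠ a} ≃ {σ : Perm α // σ a = b} :=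
  (Perm.subtypeEquivSubtypePerm (· ≠ a)).trans <|
    subtypeEquiv (Equiv.mulLeft (swap a b)) fun f => by
      simp [Perm.mul_apply, swap_apply_eq_iff]

theorem subtypeNeEquivApplyEq_apply_of_ne {a b x : α} (f : Perm {x // x ≠ a}) (hx : x ≠ a) :
    (subtypeNeEquivApplyEq a b f : Perm α) x = swap a b (f ⟨x, hx⟩) := by
  simp [subtypeNeEquivApplyEq, Perm.mul_apply, ofSubtype_apply_of_mem f hx]

theorem subtypeNeEquivApplyEq_apply_eq_self_iff {a b x : α} (f : Perm {x // x ≠ a})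
    (ha : x ≠ a) (hb : x ≠ b) :
    (subtypeNeEquivApplyEq a b f : Perm α) x = x ↔ f ⟨x, ha⟩ = ⟨x, ha⟩ := by
  rw [subtypeNeEquivApplyEq_apply_of_ne f ha, swap_apply_eq_iff, swap_apply_of_ne_of_ne ha hb,
    Subtype.ext_iff]

end Equiv.Perm

section Fin

open Equiv Finset

variable {m : ℕ}

def permFinSuccEquivApplyEq (i j : Fin (m + 1)) :
    Perm (Fin m) ≃ {σ : Perm (Fin (m + 1)) // σ i = j} :=
  (finSuccAboveEquiv i).permCongr.trans (Perm.subtypeNeEquivApplyEq i j)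

theorem permFinSuccEquivApplyEq_apply_succAbove_eq_iff {i j : Fin (m + 1)} (γ : Perm (Fin m))
    {y : Fin m} (hy : i.succAbove y ≠ j) :
    (permFinSuccEquivApplyEq i j γ : Perm (Fin (m + 1))) (i.succAbove y) = i.succAbove y ↔
      γ y = y := by
  rw [permFinSuccEquivApplyEq, trans_apply,
    Perm.subtypeNeEquivApplyEq_apply_eq_self_iff _ (i.succAbove_ne y) hy]
  simp [permCongr_apply, ← finSuccAboveEquiv_apply]

theorem permFinSuccEquivApplyEq_apply_castSucc_eq_iff {k : ℕ} {i j : Fin (m + 1)} (hi : k ≤ i)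
    (hj : k ≤ j) (γ : Perm (Fin m)) {y : Fin m} (hy : (y : ℕ) < k) :
    (permFinSuccEquivApplyEq i j γ : Perm (Fin (m + 1))) y.castSucc = y.castSucc ↔ γ y = y := by
  have hyi : y.castSucc < i := Fin.lt_def.2 (by simp; omega)
  rw [← Fin.succAbove_of_castSucc_lt _ _ hyi]
  exact permFinSuccEquivApplyEq_apply_succAbove_eq_iff γ
    (Fin.ne_of_val_ne (by rw [Fin.succAbove_of_castSucc_lt _ _ hyi]; simp; omega))

theorem card_filter_lt_permFinSuccEquivApplyEq_eq {k : ℕ} {i j : Fin (m + 1)} (hi : k ≤ i)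
    (hj : k ≤ j) (γ : Perm (Fin m)) :
    #{x : Fin (m + 1) |
        (x : ℕ) < k ∧ (permFinSuccEquivApplyEq i j γ : Perm (Fin (m + 1))) x = x} =
      #{y : Fin m | (y : ℕ) < k ∧ γ y = y} := by
  rw [eq_comm, ← card_map Fin.castSuccEmb]
  refine congrArg Finset.card ?_
  ext x
  simp only [mem_filter, mem_univ, true_and, mem_map, Fin.coe_castSuccEmb]
  constructor
  · rintro ⟨y, ⟨hyk, hy⟩, rfl⟩
    exact ⟨by simpa using hyk,
      (permFinSuccEquivApplyEq_apply_castSucc_eq_iff hi hj γ hyk).2 hy⟩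
  · rintro ⟨hxk, hx⟩
    obtain ⟨y, rfl⟩ :=
      Fin.exists_castSucc_eq.2 (Fin.ne_last_of_lt (a := x) (b := i) (Fin.lt_def.2 (by omega)))
    exact ⟨y, ⟨by simpa using hxk,
      (permFinSuccEquivApplyEq_apply_castSucc_eq_iff hi hj γ (by simpa using hxk)).1 hx⟩, rfl⟩

end Fin

theorem stmt6_general (n k d : ℕ) (i j : Fin n) (hi : k ≤ (i : ℕ)) (hj : k ≤ (j : ℕ)) :
    Nat.card {α : Equiv.Perm (Fin n) //
        (Finset.univ.filter (fun x : Fin n => (x : ℕ) < k ∧ α x = x)).card = d ∧ α i = j}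
      = c (n - 1) k d := by
  obtain ⟨m, rfl⟩ := Nat.exists_eq_add_one_of_ne_zero i.pos.ne'
  rw [c, Nat.add_sub_cancel]
  symm
  refine Nat.card_congr <| ((permFinSuccEquivApplyEq i j).subtypeEquiv fun γ => ?_).trans <|
    (Equiv.subtypeSubtypeEquivSubtypeInter (fun σ : Equiv.Perm (Fin (m + 1)) => σ i = j)
      _).trans <|
      Equiv.subtypeEquivRight fun _ => and_comm
  rw [card_filter_lt_permFinSuccEquivApplyEq_eq hi hj]

theorem stmt6 (n k d : ℕ) (hn : 2 ≤ n) (hk1 : 1 ≤ k) (hk : k ≤ n - 1)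
    (hd : d ≤ k) (i j : Fin n) (hi : k ≤ (i : ℕ)) (hj : k ≤ (j : ℕ)) :
    Nat.card {α : Equiv.Perm (Fin n) //
        (Finset.univ.filter (fun x : Fin n => (x : ℕ) < k ∧ α x = x)).card = d ∧ α i = j}
      = c (n - 1) k d :=
  stmt6_general n k d i j hi hj
end

section
/- For 0 ≤ a ≤ d ≤ k < n, the conditional probability satisfies f(n,k,d) = f(n-a, k-a, d-a). -/
/-!
Double count the pairs `(σ, i)` with `i < k + 1` a fixed point of `σ ∈ Perm (Fin (m + 1))`, where
`σ` has exactly `d + 1` fixed points below `k + 1`. A permutation fixing `i` is a permutation of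
the other `m` points with `d` fixed points among the other `k` marked ones, and the number of
those depends only on the two cardinalities, so
`(d + 1) * c (m + 1) (k + 1) (d + 1) = (k + 1) * c m k d`.
Numerator and denominator of `f (m + 2) (k + 1) (d + 1)` thus carry the same factor
`(k + 1) / (d + 1)` relative to those of `f (m + 1) k d`; iterating `a` times gives the theorem.
-/

open Finset Equiv

section FixedPointsIn

variable {α β : Type*} [DecidableEq α] [DecidableEq β]

def fixedPointsIn (σ : Perm α) (s : Finset α) : Finset α := {x ∈ s | σ x = x}

lemma fixedPointsIn_permCongr (e : α ≃ β) {s : Finset α} {t : Finset β}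
    (he : ∀ x, e x ∈ t ↔ x ∈ s) (σ : Perm α) :
    fixedPointsIn (e.permCongr σ) t = (fixedPointsIn σ s).map e.toEmbedding := by
  ext y
  obtain ⟨x, rfl⟩ := e.surjective y
  rw [fixedPointsIn, fixedPointsIn, mem_filter, mem_map_equiv]
  simp [he]

lemma card_fixedPointsIn_ofSubtype {s : Finset α} {i : α} (hi : i ∈ s)
    (τ : Perm {x // x ≠ i}) :
    #(fixedPointsIn (Perm.ofSubtype τ) s) = #(fixedPointsIn τ (s.subtype (· ≠ i))) + 1 := by
  have hsub : fixedPointsIn τ (s.subtype (· ≠ i)) =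
      (fixedPointsIn (Perm.ofSubtype τ) s).subtype (· ≠ i) := by
    ext x
    simp [fixedPointsIn, Subtype.ext_iff]
  have hfix : i ∈ fixedPointsIn (Perm.ofSubtype τ) s := by
    simp [fixedPointsIn, hi, Perm.ofSubtype_apply_of_not_mem]
  rw [hsub, card_subtype, filter_ne', card_erase_add_one hfix]

variable [Fintype α] [Fintype β]

def permsWithFixedPointsIn (s : Finset α) (d : ℕ) : Finset (Perm α) :=
  {σ | #(fixedPointsIn σ s) = d}

lemma mem_permsWithFixedPointsIn {s : Finset α} {d : ℕ} {σ : Perm α} :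
    σ ∈ permsWithFixedPointsIn s d ↔ #(fixedPointsIn σ s) = d := by
  simp [permsWithFixedPointsIn]

lemma card_permsWithFixedPointsIn_congr (e : α ≃ β) {s : Finset α} {t : Finset β}
    (he : ∀ x, e x ∈ t ↔ x ∈ s) (d : ℕ) :
    #(permsWithFixedPointsIn s d) = #(permsWithFixedPointsIn t d) :=
  card_equiv e.permCongr fun σ => by
    simp only [mem_permsWithFixedPointsIn, fixedPointsIn_permCongr e he, card_map]

lemma exists_equiv_forall_apply_mem_iff {s : Finset α} {t : Finset β}
    (hα : Fintype.card α = Fintype.card β) (hs : #s = #t) :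
    ∃ e : α ≃ β, ∀ x, e x ∈ t ↔ x ∈ s := by
  have hin : Fintype.card {x // x ∈ s} = Fintype.card {y // y ∈ t} := by simpa using hs
  have hout : Fintype.card {x // x ∉ s} = Fintype.card {y // y ∉ t} := by
    simp only [Fintype.card_subtype_compl, hin, hα]
  let e := (sumCompl (· ∈ s)).symm.trans
    (((Fintype.equivOfCardEq hin).sumCongr (Fintype.equivOfCardEq hout)).trans
      (sumCompl (· ∈ t)))
  refine ⟨e, fun x => ?_⟩
  by_cases hx : x ∈ s
  · simp [e, sumCompl_symm_apply_of_pos, hx]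
  · simpa [e, sumCompl_symm_apply_of_neg, hx] using (Fintype.equivOfCardEq hout ⟨x, hx⟩).2

lemma card_permsWithFixedPointsIn_eq_of_card_eq {s : Finset α} {t : Finset β}
    (hα : Fintype.card α = Fintype.card β) (hs : #s = #t) (d : ℕ) :
    #(permsWithFixedPointsIn s d) = #(permsWithFixedPointsIn t d) := by
  obtain ⟨e, he⟩ := exists_equiv_forall_apply_mem_iff hα hs
  exact card_permsWithFixedPointsIn_congr e he d

lemma mul_card_permsWithFixedPointsIn (s : Finset α) (d : ℕ) :
    d * #(permsWithFixedPointsIn s d) =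
      ∑ i ∈ s, #{σ ∈ permsWithFixedPointsIn s d | σ i = i} :=
  calc d * #(permsWithFixedPointsIn s d)
      = ∑ σ ∈ permsWithFixedPointsIn s d, #(fixedPointsIn σ s) := by
        rw [sum_congr rfl fun σ hσ => mem_permsWithFixedPointsIn.mp hσ, sum_const, smul_eq_mul,
          mul_comm]
    _ = _ := sum_card_bipartiteAbove_eq_sum_card_bipartiteBelow _

lemma card_filter_apply_eq_self_permsWithFixedPointsIn {s : Finset α} {i : α} (hi : i ∈ s)
    (d : ℕ) :
    #{σ ∈ permsWithFixedPointsIn s (d + 1) | σ i = i} =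
      #(permsWithFixedPointsIn (s.subtype (· ≠ i)) d) := by
  symm
  refine card_bij (fun τ _ => Perm.ofSubtype τ) (fun τ hτ => ?_)
    (fun _ _ _ _ h => Perm.ofSubtype_injective h) (fun σ hσ => ?_)
  · rw [mem_filter, mem_permsWithFixedPointsIn, card_fixedPointsIn_ofSubtype hi,
      mem_permsWithFixedPointsIn.mp hτ]
    exact ⟨rfl, Perm.ofSubtype_apply_of_not_mem τ (not_not.mpr rfl)⟩
  · rw [mem_filter, mem_permsWithFixedPointsIn] at hσ
    have hne : ∀ x, σ x ≠ i ↔ x ≠ i := fun x => by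
      conv_lhs => rw [← hσ.2]
      exact σ.injective.ne_iff
    have hext : Perm.ofSubtype (σ.subtypePerm hne) = σ :=
      Perm.ofSubtype_subtypePerm hne fun x hx => show x ≠ i by rintro rfl; exact hx hσ.2
    refine ⟨σ.subtypePerm hne, ?_, hext⟩
    rw [mem_permsWithFixedPointsIn, ← add_left_inj 1, ← card_fixedPointsIn_ofSubtype hi, hext,
      hσ.1]

lemma succ_mul_card_permsWithFixedPointsIn (s : Finset α) (d : ℕ) :
    (d + 1) * #(permsWithFixedPointsIn s (d + 1)) =
      ∑ i ∈ s, #(permsWithFixedPointsIn (s.subtype (· ≠ i)) d) := by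
  rw [mul_card_permsWithFixedPointsIn]
  exact sum_congr rfl fun i hi => card_filter_apply_eq_self_permsWithFixedPointsIn hi d

end FixedPointsIn

lemma c_eq_card_permsWithFixedPointsIn (n k d : ℕ) :
    c n k d = #(permsWithFixedPointsIn ({i | i < k} : Finset (Fin n)) d) := by
  rw [c, Nat.card_eq_fintype_card, Fintype.card_subtype]
  simp only [permsWithFixedPointsIn, fixedPointsIn, filter_filter]

lemma succ_mul_c_succ_succ_succ {m k : ℕ} (hk : k ≤ m) (d : ℕ) :
    (d + 1) * c (m + 1) (k + 1) (d + 1) = (k + 1) * c m k d := by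
  set s : Finset (Fin (m + 1)) := {i | i < k + 1}
  have hcard : #s = k + 1 := by
    rw [Fin.card_filter_val_lt]
    omega
  have hterm : ∀ i ∈ s, #(permsWithFixedPointsIn (s.subtype (· ≠ i)) d) = c m k d :=
    fun i hi => by
      rw [c_eq_card_permsWithFixedPointsIn]
      refine card_permsWithFixedPointsIn_eq_of_card_eq (by simp) ?_ d
      rw [card_subtype, filter_ne', card_erase_of_mem hi, hcard, Fin.card_filter_val_lt]
      omega
  rw [c_eq_card_permsWithFixedPointsIn, succ_mul_card_permsWithFixedPointsIn, sum_congr rfl hterm,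
    sum_const, smul_eq_mul, hcard]

lemma f_succ_succ_succ {m k : ℕ} (hk : k ≤ m) (d : ℕ) :
    f (m + 2) (k + 1) (d + 1) = f (m + 1) k d := by
  have hc : ∀ j, k ≤ j → (c (j + 1) (k + 1) (d + 1) : ℝ) = (k + 1) / (d + 1) * c j k d :=
    fun j hj => by
      rw [div_mul_eq_mul_div, eq_div_iff (by positivity), mul_comm]
      exact_mod_cast succ_mul_c_succ_succ_succ hj d
  rw [f, f, show m + 2 - 1 = m + 1 from rfl, hc m hk, hc (m + 1) (by omega)]
  exact mul_div_mul_left _ _ (by positivity)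

theorem stmt10 (n k d a : ℕ) (ha : a ≤ d) (hd : d ≤ k) (hk : k < n) :
    f n k d = f (n - a) (k - a) (d - a) := by
  induction a generalizing n k d with
  | zero => rfl
  | succ a ih =>
    obtain ⟨d, rfl⟩ : ∃ d', d = d' + 1 := ⟨d - 1, by omega⟩
    obtain ⟨k, rfl⟩ : ∃ k', k = k' + 1 := ⟨k - 1, by omega⟩
    obtain ⟨m, rfl⟩ : ∃ m, n = m + 2 := ⟨n - 2, by omega⟩
    rw [f_succ_succ_succ (by omega), ih (m + 1) k d (by omega) (by omega) (by omega)]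
    congr 1 <;> omega
end

section
/- For 0 ≤ k < n, p(n-1,k,0) ≤ p(n,k,0). -/
namespace Equiv.Perm

variable {α β : Type*}

def fixedPointFreeOn (s : Set α) : Set (Perm α) :=
  {σ | ∀ a ∈ s, σ a ≠ a}

theorem mem_fixedPointFreeOn {s : Set α} {σ : Perm α} :
    σ ∈ fixedPointFreeOn s ↔ ∀ a ∈ s, σ a ≠ a := Iff.rfl

theorem card_fixedPointFreeOn_image (e : α ≃ β) (s : Set α) :
    Nat.card (fixedPointFreeOn (e '' s)) = Nat.card (fixedPointFreeOn s) := by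
  refine (Nat.card_congr (e.permCongr.subtypeEquiv fun σ => ?_)).symm
  simp [mem_fixedPointFreeOn, permCongr_apply, e.surjective.forall]

theorem decomposeOption_symm_mem_fixedPointFreeOn [DecidableEq α] {s : Set α} (x : Option α)
    {σ : Perm α} (hσ : σ ∈ fixedPointFreeOn s) :
    decomposeOption.symm (x, σ) ∈ fixedPointFreeOn (some '' s) := by
  rintro _ ⟨a, ha, rfl⟩
  have hσa : some (σ a) ≠ some a := by simpa using hσ a ha
  simp only [decomposeOption, coe_fn_symm_mk, coe_mul, Function.comp_apply, optionCongr_apply,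
    Option.map_some]
  rw [swap_apply_def]
  split_ifs <;> simp_all

theorem card_mul_card_fixedPointFreeOn_le [Finite α] (s : Set α) :
    (Nat.card α + 1) * Nat.card (fixedPointFreeOn s) ≤
      Nat.card (fixedPointFreeOn (some '' s) : Set (Perm (Option α))) := by
  classical
  rw [← Finite.card_option, ← Nat.card_prod]
  refine Nat.card_le_card_of_injective (fun x => ⟨decomposeOption.symm (x.1, x.2),
    decomposeOption_symm_mem_fixedPointFreeOn x.1 x.2.2⟩) fun x y h => ?_
  have := decomposeOption.symm.injective (congrArg Subtype.val h)
  exact Prod.ext (Prod.ext_iff.1 this).1 (Subtype.ext (Prod.ext_iff.1 this).2)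

end Equiv.Perm

open Equiv.Perm

theorem c_zero_eq_card_fixedPointFreeOn (n k : ℕ) :
    c n k 0 = Nat.card (fixedPointFreeOn {i : Fin n | (i : ℕ) < k}) := by
  refine Nat.card_congr (Equiv.subtypeEquivRight fun σ => ?_)
  simp [mem_fixedPointFreeOn, Finset.filter_eq_empty_iff]

theorem image_finSuccEquivLast_symm_some {m k : ℕ} (hk : k ≤ m) :
    finSuccEquivLast.symm '' (some '' {i : Fin m | (i : ℕ) < k}) =
      {i : Fin (m + 1) | (i : ℕ) < k} := by
  ext i
  simp only [Set.image_image, finSuccEquivLast_symm_some, Set.mem_image, Set.mem_ofPred_eq]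
  refine ⟨fun ⟨a, ha, hai⟩ => hai ▸ ha, fun hi => ⟨⟨i, by omega⟩, hi, rfl⟩⟩

theorem succ_mul_c_zero_le {m k : ℕ} (hk : k ≤ m) :
    (m + 1) * c m k 0 ≤ c (m + 1) k 0 := by
  rw [c_zero_eq_card_fixedPointFreeOn, c_zero_eq_card_fixedPointFreeOn,
    ← image_finSuccEquivLast_symm_some hk, card_fixedPointFreeOn_image]
  simpa using card_mul_card_fixedPointFreeOn_le {i : Fin m | (i : ℕ) < k}

theorem stmt13 (n k : ℕ) (hk : k < n) :
    p (n - 1) k 0 ≤ p n k 0 := by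
  obtain ⟨m, rfl⟩ : ∃ m, n = m + 1 := Nat.exists_eq_add_one.2 (by omega)
  have h : ((m + 1 : ℕ) : ℝ) * c m k 0 ≤ c (m + 1) k 0 := by
    exact_mod_cast succ_mul_c_zero_le (Nat.le_of_lt_succ hk)
  rw [Nat.add_sub_cancel, p, p, Nat.factorial_succ, Nat.cast_mul, div_le_div_iff₀ (by positivity)
    (by positivity)]
  linarith [mul_le_mul_of_nonneg_right h (Nat.cast_nonneg (α := ℝ) m.factorial)]
end

section
/- For 0 < k < n, p(n,k,0) ≤ p(n-1,k-1,0). -/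
/-!
Write `D(n, k) = c n k 0`. A permutation of `Fin (n + 1)` without fixed points below `k` either
moves `k` or fixes it, and in the second case it is a permutation of the remaining `n` points
without fixed points below `k`; hence `D(n + 1, k) = D(n + 1, k + 1) + D(n, k)`. Together with
`D(n, 0) = n!`, induction on `k` turns this into
`D(n + 2, k + 1) + (n + 1 - k) D(n, k) = (n + 2) D(n + 1, k)`, so
`D(n + 2, k + 1) ≤ (n + 2) D(n + 1, k)`, which is the claim after dividing by `(n + 2)!`.
-/

open Equiv

section DerangementsOn

variable {α β : Type*}

noncomputable def numDerangementsOn (s : α → Prop) : ℕ :=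
  Nat.card {σ : Perm α // ∀ x, s x → σ x ≠ x}

theorem numDerangementsOn_congr {s : α → Prop} {t : β → Prop} (e : α ≃ β)
    (h : ∀ x, s x ↔ t (e x)) : numDerangementsOn s = numDerangementsOn t :=
  Nat.card_congr <| e.permCongr.subtypeEquiv fun σ => e.forall_congr fun {x} => by
    simp [h, permCongr_apply]

theorem card_derangementsOn_fixing [DecidableEq α] {s : α → Prop} {a : α} (ha : ¬ s a) :
    Nat.card {σ : Perm α // (∀ x, s x → σ x ≠ x) ∧ σ a = a}
      = numDerangementsOn (fun x : {x // x ≠ a} => s x) := by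
  symm
  refine Nat.card_congr <| ((Perm.subtypeEquivSubtypePerm (· ≠ a)).subtypeEquiv
    (q := fun σ => ∀ x, s x → σ.1 x ≠ x) fun τ => ?_).trans
    ((subtypeSubtypeEquivSubtypeInter _ (fun σ : Perm α => ∀ x, s x → σ x ≠ x)).trans
    (subtypeEquivRight fun σ => ?_))
  · constructor
    · intro h x hx
      have hxa : x ≠ a := fun h => ha (h ▸ hx)
      rw [Perm.subtypeEquivSubtypePerm_apply_of_mem (p := (· ≠ a)) τ hxa]
      exact fun e => h ⟨x, hxa⟩ hx (Subtype.ext e)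
    · intro h x hx e
      apply h x hx
      rw [Perm.subtypeEquivSubtypePerm_apply_of_mem (p := (· ≠ a)) τ x.2, e]
  · simp [and_comm]

theorem numDerangementsOn_eq_add [Finite α] [DecidableEq α] {s : α → Prop} {a : α}
    (ha : ¬ s a) :
    numDerangementsOn s
      = numDerangementsOn (fun x => s x ∨ x = a)
        + numDerangementsOn (fun x : {x // x ≠ a} => s x) := by
  rw [← card_derangementsOn_fixing ha, numDerangementsOn, numDerangementsOn, add_comm,
    ← Nat.card_sum]
  refine Nat.card_congr <|
    (sumCompl fun σ : {σ : Perm α // ∀ x, s x → σ x ≠ x} => σ.1 a = a).symm.trans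
    (sumCongr (subtypeSubtypeEquivSubtypeInter _ (fun σ : Perm α => σ a = a))
      ((subtypeSubtypeEquivSubtypeInter _ (fun σ : Perm α => σ a ≠ a)).trans
        (subtypeEquivRight fun σ => ⟨?_, ?_⟩)))
  · rintro ⟨h, hne⟩ x (hx | rfl)
    exacts [h x hx, hne]
  · exact fun h => ⟨fun x hx => h x (Or.inl hx), h a (Or.inr rfl)⟩

end DerangementsOn

theorem Fin.val_succAbove_lt_iff_s14 {n k : ℕ} {a : Fin (n + 1)} (hka : k ≤ a) (j : Fin n) :
    (a.succAbove j : ℕ) < k ↔ (j : ℕ) < k := by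
  unfold Fin.succAbove
  split_ifs with h
  · simp
  · simp only [Fin.lt_def, Fin.val_castSucc, not_lt] at h
    simp only [Fin.val_succ]
    omega

theorem c_zero_eq_numDerangementsOn (n k : ℕ) :
    c n k 0 = numDerangementsOn (fun i : Fin n => (i : ℕ) < k) := by
  refine Nat.card_congr (subtypeEquivRight fun σ => ?_)
  simp [Finset.filter_eq_empty_iff, not_and]

theorem c_zero_zero (n : ℕ) : c n 0 0 = n.factorial := by
  simp [c_zero_eq_numDerangementsOn, numDerangementsOn, Fintype.card_perm]

theorem c_zero_eq_add (n k : ℕ) (hk : k ≤ n) :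
    c (n + 1) k 0 = c (n + 1) (k + 1) 0 + c n k 0 := by
  let a : Fin (n + 1) := ⟨k, by omega⟩
  have ha : ¬ ((a : ℕ) < k) := lt_irrefl k
  rw [c_zero_eq_numDerangementsOn, c_zero_eq_numDerangementsOn, c_zero_eq_numDerangementsOn,
    numDerangementsOn_eq_add (s := fun i : Fin (n + 1) => (i : ℕ) < k) ha]
  congr 1
  · congr 1
    ext i
    simp only [a, Fin.ext_iff]
    omega
  · exact (numDerangementsOn_congr (finSuccAboveEquiv a)
      fun j => (Fin.val_succAbove_lt_iff_s14 (a := a) le_rfl j).symm).symm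

theorem c_zero_recurrence (k n : ℕ) (hk : k ≤ n) :
    (c (n + 2) (k + 1) 0 : ℤ) + (n + 1 - k) * c n k 0 = (n + 2) * c (n + 1) k 0 := by
  induction k generalizing n with
  | zero =>
    have h := c_zero_eq_add (n + 1) 0 (Nat.zero_le _)
    simp only [c_zero_zero, Nat.factorial_succ] at h ⊢
    zify at h
    push_cast at h ⊢
    linear_combination -h
  | succ k ih =>
    obtain ⟨m, rfl⟩ : ∃ m, n = m + 1 := ⟨n - 1, by omega⟩
    have h₁ := c_zero_eq_add (m + 2) (k + 1) (by omega)
    have h₂ := c_zero_eq_add (m + 1) k (by omega)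
    have h₃ := c_zero_eq_add m k (by omega)
    have ih₁ := ih (m + 1) (by omega)
    have ih₀ := ih m (by omega)
    zify at h₁ h₂ h₃
    push_cast at *
    linear_combination ih₁ - ih₀ - h₁ + (m + 3) * h₂ - (m + 1 - k) * h₃

theorem c_zero_succ_le (n k : ℕ) (hk : k ≤ n) :
    c (n + 2) (k + 1) 0 ≤ (n + 2) * c (n + 1) k 0 := by
  have hslack : (0 : ℤ) ≤ (n + 1 - k) * c n k 0 := by
    apply mul_nonneg <;> [omega; positivity]
  have h := c_zero_recurrence k n hk
  exact_mod_cast (by linarith : (c (n + 2) (k + 1) 0 : ℤ) ≤ (n + 2) * c (n + 1) k 0)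

theorem stmt14 (n k : ℕ) (hk0 : 0 < k) (hk : k < n) :
    p n k 0 ≤ p (n - 1) (k - 1) 0 := by
  obtain ⟨k, rfl⟩ : ∃ j, k = j + 1 := ⟨k - 1, by omega⟩
  obtain ⟨n, rfl⟩ : ∃ m, n = m + 2 := ⟨n - 2, by omega⟩
  have h : (c (n + 2) (k + 1) 0 : ℝ) ≤ (n + 2) * c (n + 1) k 0 := by
    exact_mod_cast c_zero_succ_le n k (by omega)
  rw [p, p, show n + 2 - 1 = n + 1 from rfl, Nat.add_sub_cancel,
    div_le_div_iff₀ (by positivity) (by positivity), Nat.factorial_succ (n + 1)]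
  push_cast
  calc (c (n + 2) (k + 1) 0 : ℝ) * (n + 1).factorial
      ≤ (n + 2) * c (n + 1) k 0 * (n + 1).factorial := by gcongr
    _ = c (n + 1) k 0 * ((n + 1 + 1) * (n + 1).factorial) := by ring
end
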